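/- arXiv:0912.4883 — 2 statements merged into one kernel-verified Lean document; each statement's English description precedes it below -/
import Mathlib

section
/- Let C be a set of probability measures on X^∞ (X finite) and suppose there exists a measure ρ such that every μ ∈ C is absolutely continuous with respect to ρ. Then there exist measures μ_k ∈ C, k ∈ ℕ, such that for any positive weights w_k summing to 1, every μ ∈ C is absolutely continuous with respect to ν := ∑_{k∈ℕ} w_k μ_k. -/
open MeasureTheory Filter
open scoped ENNReal

lemma pi_countablyGenerated_aux {ι : Type*} [Countable ι] {π : ι → Type*}
    [m : ∀ i, MeasurableSpace (π i)] [∀ i, MeasurableSpace.CountablyGenerated (π i)] :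
    MeasurableSpace.CountablyGenerated (∀ i, π i) := by
  constructor
  refine ⟨⋃ i, (fun s => (fun f : ∀ i, π i => f i) ⁻¹' s) ''
      MeasurableSpace.countableGeneratingSet (π i), ?_, ?_⟩
  · exact Set.countable_iUnion fun i =>
      (MeasurableSpace.countable_countableGeneratingSet).image _
  · rw [← MeasurableSpace.iSup_generateFrom]
    simp_rw [← MeasurableSpace.comap_generateFrom,
      MeasurableSpace.generateFrom_countableGeneratingSet]
    rfl

/-- If every measure in a nonempty class `C` of probability measures on `X^∞` is absolutely
continuous with respect to some measure `ρ`, then there are countably many `μ_k ∈ C` such that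
every `μ ∈ C` is absolutely continuous with respect to any mixture `ν = ∑ w_k μ_k` with
positive weights summing to one. -/
theorem stmt4 {X : Type*} [Fintype X] [MeasurableSpace X]
    (C : Set (Measure (ℕ → X))) (hne : C.Nonempty)
    (hprob : ∀ μ ∈ C, IsProbabilityMeasure μ)
    (ρ : Measure (ℕ → X)) [IsProbabilityMeasure ρ]
    (habs : ∀ μ ∈ C, μ ≪ ρ) :
    ∃ μs : ℕ → Measure (ℕ → X), (∀ k, μs k ∈ C) ∧
      ∀ w : ℕ → ℝ≥0∞, (∀ k, 0 < w k) → (∑' k, w k = 1) →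
        ∀ μ ∈ C, μ ≪ Measure.sum (fun k => w k • μs k) := by
  classical
  haveI : MeasurableSpace.CountablyGenerated (ℕ → X) := pi_countablyGenerated_aux
  haveI : Fact ((1:ℝ≥0∞) ≤ 1) := ⟨le_refl 1⟩
  haveI : Fact ((1:ℝ≥0∞) ≠ ∞) := ⟨ENNReal.one_ne_top⟩
  -- integrability of densities
  have hint : ∀ μ ∈ C, Integrable (fun x => (μ.rnDeriv ρ x).toReal) ρ := by
    intro μ hμ
    haveI := hprob μ hμ
    exact Measure.integrable_toReal_rnDeriv
  -- the map sending a measure in `C` to its density as an element of `L¹(ρ)`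
  let F : C → Lp ℝ 1 ρ := fun μ => (hint μ.1 μ.2).toL1 _
  -- key integral identity
  have hFint : ∀ (c : C) (A : Set (ℕ → X)),
      ∫ x in A, (F c : (ℕ → X) → ℝ) x ∂ρ = (c.1 A).toReal := by
    intro c A
    haveI := hprob c.1 c.2
    rw [integral_congr_ae (ae_restrict_of_ae (hint c.1 c.2).coeFn_toL1)]
    exact Measure.setIntegral_toReal_rnDeriv (habs c.1 c.2) A
  -- a countable dense subset of the set of densities
  have hsep : TopologicalSpace.IsSeparable (Set.range F) :=
    TopologicalSpace.IsSeparable.of_separableSpace _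
  obtain ⟨T, hTsub, hTc, hTcl⟩ := hsep.exists_countable_dense_subset
  have hTne : T.Nonempty := by
    obtain ⟨μ0, hμ0⟩ := hne
    have hmem : F ⟨μ0, hμ0⟩ ∈ closure T := hTcl (Set.mem_range_self _)
    rcases T.eq_empty_or_nonempty with h | h
    · rw [h, closure_empty] at hmem; exact absurd hmem (Set.notMem_empty _)
    · exact h
  obtain ⟨f, hf⟩ := hTc.exists_eq_range hTne
  have hmem : ∀ k, ∃ c : C, F c = f k := fun k =>
    hTsub (hf ▸ Set.mem_range_self k)
  refine ⟨fun k => (Classical.choose (hmem k)).1,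
    fun k => (Classical.choose (hmem k)).2, ?_⟩
  intro w hw hw1 μ hμ
  haveI := hprob μ hμ
  refine Measure.AbsolutelyContinuous.mk fun A hA hνA => ?_
  -- each chosen measure vanishes on `A`
  have hk0 : ∀ k, ((Classical.choose (hmem k)).1 : Measure (ℕ → X)) A = 0 := by
    intro k
    rw [Measure.sum_apply _ hA] at hνA
    have h0 := (ENNReal.tsum_eq_zero.mp hνA) k
    rw [Measure.smul_apply, smul_eq_mul] at h0
    rcases mul_eq_zero.mp h0 with h | h
    · exact absurd h (hw k).ne'
    · exact h
  -- the set-integral functional is continuous and vanishes on `T`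
  have hφc : Continuous (fun g : Lp ℝ 1 ρ => ∫ x in A, g x ∂ρ) :=
    continuous_setIntegral A
  have hT0 : T ⊆ (fun g : Lp ℝ 1 ρ => ∫ x in A, g x ∂ρ) ⁻¹' {0} := by
    intro g hg
    rw [hf] at hg
    obtain ⟨k, rfl⟩ := hg
    have hspec := Classical.choose_spec (hmem k)
    rw [Set.mem_preimage, Set.mem_singleton_iff, ← hspec, hFint, hk0 k,
      ENNReal.toReal_zero]
  have hcl : ∫ x in A, (F ⟨μ, hμ⟩ : (ℕ → X) → ℝ) x ∂ρ = 0 := by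
    have h1 : closure T ⊆ (fun g : Lp ℝ 1 ρ => ∫ x in A, g x ∂ρ) ⁻¹' {0} :=
      closure_minimal hT0 (isClosed_singleton.preimage hφc)
    exact h1 (hTcl (Set.mem_range_self _))
  have htr : (μ A).toReal = 0 := by rw [← hFint ⟨μ, hμ⟩ A]; exact hcl
  exact ((ENNReal.toReal_eq_zero_iff _).mp htr).resolve_right (measure_ne_top μ A)
end

section
/- There exists an uncountable set C of probability measures on {0,1}^∞ and a measure ν such that ν predicts every μ ∈ C in expected average KL divergence (i.e., (1/n) d_n(μ,ν) → 0), while for any two distinct μ₁, μ₂ ∈ C, limsup_n (1/n) d_n(μ₁, μ₂) = ∞; in particular, C is not separable with respect to the asymptotic expected average KL divergence. -/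
open MeasureTheory Filter Real
open scoped ENNReal

/-- The cylinder set of all infinite sequences starting with the string `s`. -/
def cyl {X : Type*} [MeasurableSpace X] {n : ℕ} (s : Fin n → X) : Set (ℕ → X) :=
  {x | ∀ i : Fin n, x i = s i}

/-- The expected cumulative KL divergence between `μ` and `ρ` restricted to the first `n`
observations, with values in the extended reals (`⊤` when `μ` charges a cylinder that `ρ`
does not charge). -/
noncomputable def dKLe {X : Type*} [Fintype X] [MeasurableSpace X]
    (μ ρ : Measure (ℕ → X)) (n : ℕ) : EReal :=
  ∑ s : Fin n → X,
    if μ (cyl s) = 0 then (0 : EReal)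
    else if ρ (cyl s) = 0 then (⊤ : EReal)
    else (((μ (cyl s)).toReal *
      Real.logb 2 ((μ (cyl s)).toReal / (ρ (cyl s)).toReal) : ℝ) : EReal)

/-!
Take `C` to be the Dirac measures at the sequences whose zeros sit exactly at the positions `2 ^ k`,
`k ∈ A`, for `A ⊆ ℕ`. Two distinct Dirac measures disagree on a cylinder, so their divergence is
eventually `⊤`; this also rules out any countable dense subclass. The prefix of length `n` of such
a sequence only involves the elements `k ∈ A` with `2 ^ k < n`, so it is also the prefix of a
sequence coded by a finite set of binary code at most `n²`. A mixture of these countably many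
Dirac measures with weight `≈ m⁻²` at code `m` therefore charges every such prefix with
probability at least `(n + 2)⁻⁴`, and its loss on every member of `C` is `O(log n) = o(n)`.
-/

open Topology Asymptotics

lemma tendsto_inv_mul_logb_add_two :
    Tendsto (fun n : ℕ => (n : ℝ)⁻¹ * logb 2 (n + 2)) atTop (𝓝 0) := by
  have hlog : (fun n : ℕ => log ((n : ℝ) + 2)) =o[atTop] fun n : ℕ => (n : ℝ) + 2 :=
    isLittleO_log_id_atTop.comp_tendsto
      (tendsto_atTop_add_const_right _ 2 tendsto_natCast_atTop_atTop)
  have hlin : (fun n : ℕ => (n : ℝ) + 2) =O[atTop] fun n : ℕ => (n : ℝ) := by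
    refine IsBigO.of_bound 3 ((eventually_ge_atTop 1).mono fun n hn => ?_)
    have : (1 : ℝ) ≤ n := by exact_mod_cast hn
    rw [Real.norm_of_nonneg (by positivity), Real.norm_of_nonneg (by positivity)]
    linarith
  have := ((hlog.trans_isBigO hlin).tendsto_div_nhds_zero).div_const (log 2)
  simpa [logb, div_eq_inv_mul, mul_comm, mul_left_comm, mul_assoc] using this

section Cylinders

variable {X : Type*} [MeasurableSpace X]

def finPrefix (x : ℕ → X) (n : ℕ) : Fin n → X := fun i => x i

lemma mem_cyl_iff {x : ℕ → X} {n : ℕ} {s : Fin n → X} : x ∈ cyl s ↔ finPrefix x n = s :=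
  funext_iff.symm

lemma dirac_cyl_finPrefix (x : ℕ → X) (n : ℕ) : Measure.dirac x (cyl (finPrefix x n)) = 1 :=
  Measure.dirac_apply_of_mem (mem_cyl_iff.mpr rfl)

variable [MeasurableSingletonClass X]

lemma measurableSet_cyl {n : ℕ} (s : Fin n → X) : MeasurableSet (cyl s) := by
  have : cyl s = ⋂ i : Fin n, (fun x : ℕ → X => x i) ⁻¹' {s i} := by
    ext x
    simp [cyl]
  rw [this]
  exact .iInter fun i => measurable_pi_apply _ (measurableSet_singleton _)

lemma dirac_cyl_of_ne {x : ℕ → X} {n : ℕ} {s : Fin n → X} (h : finPrefix x n ≠ s) :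
    Measure.dirac x (cyl s) = 0 := by
  rw [Measure.dirac_apply' _ (measurableSet_cyl s),
    Set.indicator_of_notMem (mt mem_cyl_iff.mp h)]

lemma dKLe_dirac [Fintype X] (x : ℕ → X) (ρ : Measure (ℕ → X)) (n : ℕ) :
    dKLe (Measure.dirac x) ρ n =
      if ρ (cyl (finPrefix x n)) = 0 then ⊤
      else ((-logb 2 (ρ (cyl (finPrefix x n))).toReal : ℝ) : EReal) := by
  rw [dKLe, Fintype.sum_eq_single (finPrefix x n) fun s hs => by
    simp [dirac_cyl_of_ne (Ne.symm hs)]]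
  rw [dirac_cyl_finPrefix]
  simp [Real.logb_inv]

lemma eventually_dKLe_dirac_dirac_eq_top [Fintype X] {x y : ℕ → X} (hxy : x ≠ y) :
    ∀ᶠ n in atTop, dKLe (Measure.dirac x) (Measure.dirac y) n = ⊤ := by
  obtain ⟨i, hi⟩ := Function.ne_iff.mp hxy
  filter_upwards [eventually_gt_atTop i] with n hn
  have hne : finPrefix y n ≠ finPrefix x n := fun h => hi (congrFun h ⟨i, hn⟩).symm
  simp [dKLe_dirac, dirac_cyl_of_ne hne]

lemma limsup_inv_mul_dKLe_dirac_dirac [Fintype X] {x y : ℕ → X} (hxy : x ≠ y) :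
    limsup (fun n : ℕ =>
      (((n : ℝ)⁻¹ : ℝ) : EReal) * dKLe (Measure.dirac x) (Measure.dirac y) n) atTop = ⊤ := by
  refine (limsup_congr ?_).trans (limsup_const ⊤)
  filter_upwards [eventually_dKLe_dirac_dirac_eq_top hxy, eventually_gt_atTop 0]
    with n hn hpos
  rw [hn]
  exact EReal.coe_mul_top_of_pos (by positivity)

lemma tendsto_inv_mul_dKLe_dirac [Fintype X] {ρ : Measure (ℕ → X)} [IsProbabilityMeasure ρ]
    {x : ℕ → X} (k : ℕ)
    (hρ : ∀ n : ℕ, ((n + 2 : ℝ) ^ k)⁻¹ ≤ (ρ (cyl (finPrefix x n))).toReal) :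
    Tendsto (fun n : ℕ => (((n : ℝ)⁻¹ : ℝ) : EReal) * dKLe (Measure.dirac x) ρ n)
      atTop (𝓝 0) := by
  set p : ℕ → ℝ := fun n => (ρ (cyl (finPrefix x n))).toReal
  have hpos n : 0 < p n := (by positivity : (0 : ℝ) < _).trans_le (hρ n)
  have hloss (n : ℕ) : (((n : ℝ)⁻¹ : ℝ) : EReal) * dKLe (Measure.dirac x) ρ n =
      (((n : ℝ)⁻¹ * -logb 2 (p n) : ℝ) : EReal) := by
    rw [dKLe_dirac, if_neg (ENNReal.toReal_pos_iff.mp (hpos n)).1.ne', EReal.coe_mul]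
  simp_rw [hloss]
  refine EReal.tendsto_coe.mpr (squeeze_zero (fun n => ?_) (fun n => ?_)
    (by simpa using tendsto_inv_mul_logb_add_two.const_mul (k : ℝ)))
  · have hle : p n ≤ 1 := ENNReal.toReal_le_of_le_ofReal zero_le_one (by simpa using prob_le_one)
    exact mul_nonneg (by positivity) (neg_nonneg.mpr (logb_nonpos one_lt_two (hpos n).le hle))
  · have hinv : (p n)⁻¹ ≤ (n + 2 : ℝ) ^ k := inv_le_of_inv_le₀ (by positivity) (hρ n)
    calc (n : ℝ)⁻¹ * -logb 2 (p n) = (n : ℝ)⁻¹ * logb 2 (p n)⁻¹ := by rw [logb_inv]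
      _ ≤ (n : ℝ)⁻¹ * logb 2 ((n + 2 : ℝ) ^ k) := by
          gcongr
          exacts [one_lt_two, inv_pos.mpr (hpos n)]
      _ = k * ((n : ℝ)⁻¹ * logb 2 (n + 2)) := by rw [logb_pow]; ring

end Cylinders

lemma not_exists_countable_dense_of_pairwise_eq_top {α : Type*} {C : Set α}
    (d : α → α → EReal) (hC : ¬ C.Countable) (hd : ∀ a ∈ C, ∀ b ∈ C, a ≠ b → d a b = ⊤) :
    ¬ ∃ D : Set α, D.Countable ∧ D ⊆ C ∧ ∀ a ∈ C, ∀ ε : ℝ, 0 < ε → ∃ b ∈ D, d a b < ε := by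
  rintro ⟨D, hD, hDC, hdense⟩
  refine hC (hD.mono fun a ha => ?_)
  obtain ⟨b, hb, hab⟩ := hdense a ha 1 one_pos
  obtain rfl | hne := eq_or_ne a b
  · exact hb
  · simp [hd a ha b (hDC hb) hne] at hab

lemma not_countable_range_of_injective {α : Type*} {f : Set ℕ → α} (hf : f.Injective) :
    ¬ (Set.range f).Countable := fun h => by
  have : Countable (Set ℕ) := Set.countable_univ_iff.mp
    (Set.countable_of_injective_of_countable_image hf.injOn (by rwa [Set.image_univ]))
  obtain ⟨g, hg⟩ := countable_iff_exists_injective (Set ℕ) |>.mp this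
  exact Function.cantor_injective g hg

open Classical in
noncomputable def sparseSeq (A : Set ℕ) (i : ℕ) : Bool := !decide (i ∈ (2 ^ ·) '' A)

lemma sparseSeq_eq_false_iff {A : Set ℕ} {i : ℕ} :
    sparseSeq A i = false ↔ i ∈ (2 ^ ·) '' A := by
  simp [sparseSeq]

lemma sparseSeq_injective : Function.Injective sparseSeq := by
  intro A B h
  ext k
  have hpow (A : Set ℕ) : sparseSeq A (2 ^ k) = false ↔ k ∈ A := by
    rw [sparseSeq_eq_false_iff, (Nat.pow_right_injective le_rfl).mem_set_image]
  rw [← hpow A, ← hpow B, h]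

lemma exists_finset_finPrefix_sparseSeq_eq (A : Set ℕ) (n : ℕ) :
    ∃ F : Finset ℕ, ∑ k ∈ F, 2 ^ k ≤ n * n ∧
      finPrefix (sparseSeq F) n = finPrefix (sparseSeq A) n := by
  classical
  set F := (Finset.range n).filter fun k => 2 ^ k < n ∧ k ∈ A
  refine ⟨F, ?_, funext fun i => ?_⟩
  · calc ∑ k ∈ F, 2 ^ k ≤ F.card • n :=
          Finset.sum_le_card_nsmul _ _ _ fun k hk => (Finset.mem_filter.mp hk).2.1.le
      _ ≤ n * n :=
          Nat.mul_le_mul_right n ((Finset.card_filter_le _ _).trans (Finset.card_range n).le)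
  · suffices (i : ℕ) ∈ (2 ^ ·) '' (F : Set ℕ) ↔ (i : ℕ) ∈ (2 ^ ·) '' A by
      simpa only [finPrefix, sparseSeq, Bool.not_inj_iff, decide_eq_decide]
    constructor
    · rintro ⟨k, hk, he⟩
      exact ⟨k, (Finset.mem_filter.mp hk).2.2, he⟩
    · rintro ⟨k, hk, he⟩
      have hkn : 2 ^ k < n := by simpa [← he] using i.2
      refine ⟨k, Finset.mem_filter.mpr ⟨?_, hkn, hk⟩, he⟩
      exact Finset.mem_range.mpr (Nat.lt_two_pow_self.trans hkn)

noncomputable def mixWeight (m : ℕ) : ℝ := ((m + 1) * (m + 2) : ℝ)⁻¹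

lemma mixWeight_pos (m : ℕ) : 0 < mixWeight m := by
  unfold mixWeight
  positivity

lemma mixWeight_antitone : Antitone mixWeight := fun a b hab => by
  unfold mixWeight
  gcongr

lemma sum_range_mixWeight (N : ℕ) :
    ∑ m ∈ Finset.range N, mixWeight m = 1 - (N + 1 : ℝ)⁻¹ := by
  induction N with
  | zero => simp
  | succ N ih =>
    rw [Finset.sum_range_succ, ih, mixWeight]
    push_cast
    field_simp
    ring

lemma hasSum_mixWeight : HasSum mixWeight 1 := by
  rw [hasSum_iff_tendsto_nat_of_nonneg fun m => (mixWeight_pos m).le]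
  simp only [sum_range_mixWeight]
  simpa using (tendsto_const_nhds (x := (1 : ℝ))).sub tendsto_one_div_add_atTop_nhds_zero_nat

lemma inv_pow_four_le_mixWeight_mul_self (n : ℕ) :
    ((n + 2 : ℝ) ^ 4)⁻¹ ≤ mixWeight (n * n) := by
  unfold mixWeight
  gcongr
  push_cast
  nlinarith [sq_nonneg (n : ℝ)]

/-- Finite sets are enumerated through their binary codes `∑ k ∈ F, 2 ^ k`, so that a prefix of
length `n` of a sparse sequence receives weight at least `mixWeight (n * n)`. -/
noncomputable def sparseMixture : Measure (ℕ → Bool) :=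
  Measure.sum fun F : Finset ℕ =>
    ENNReal.ofReal (mixWeight (Finset.equivBitIndices.symm F)) • Measure.dirac (sparseSeq F)

instance : IsProbabilityMeasure sparseMixture := by
  constructor
  simp only [sparseMixture, Measure.sum_apply _ MeasurableSet.univ, Measure.smul_apply,
    measure_univ, smul_eq_mul, mul_one]
  rw [Finset.equivBitIndices.symm.tsum_eq (fun m => ENNReal.ofReal (mixWeight m)),
    ← ENNReal.ofReal_tsum_of_nonneg (fun m => (mixWeight_pos m).le) hasSum_mixWeight.summable,
    hasSum_mixWeight.tsum_eq, ENNReal.ofReal_one]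

lemma inv_pow_four_le_sparseMixture_cyl (A : Set ℕ) (n : ℕ) :
    ((n + 2 : ℝ) ^ 4)⁻¹ ≤ (sparseMixture (cyl (finPrefix (sparseSeq A) n))).toReal := by
  obtain ⟨F, hcode, hF⟩ := exists_finset_finPrefix_sparseSeq_eq A n
  have hmass :
      ENNReal.ofReal (mixWeight (n * n)) ≤ sparseMixture (cyl (finPrefix (sparseSeq A) n)) :=
    calc ENNReal.ofReal (mixWeight (n * n))
        ≤ ENNReal.ofReal (mixWeight (Finset.equivBitIndices.symm F)) := by
          rw [Finset.equivBitIndices_symm_apply]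
          exact ENNReal.ofReal_le_ofReal (mixWeight_antitone hcode)
      _ = (ENNReal.ofReal (mixWeight (Finset.equivBitIndices.symm F)) •
            Measure.dirac (sparseSeq F)) (cyl (finPrefix (sparseSeq A) n)) := by
          rw [Measure.smul_apply, ← hF, dirac_cyl_finPrefix, smul_eq_mul, mul_one]
      _ ≤ sparseMixture (cyl (finPrefix (sparseSeq A) n)) := Measure.le_sum _ F _
  exact (inv_pow_four_le_mixWeight_mul_self n).trans
    ((ENNReal.ofReal_le_iff_le_toReal (measure_ne_top _ _)).mp hmass)

/-- There is an uncountable class `C` of probability measures on `{0,1}^∞` and a measure `ν`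
predicting every `μ ∈ C` in expected average KL divergence, while any two distinct members of
`C` are at asymptotic expected average KL distance `∞` from each other; in particular `C` is
not separable with respect to this divergence. -/
theorem stmt9 :
    ∃ C : Set (Measure (ℕ → Bool)), ¬ C.Countable ∧ (∀ μ ∈ C, IsProbabilityMeasure μ) ∧
      ∃ ν : Measure (ℕ → Bool), IsProbabilityMeasure ν ∧
        (∀ μ ∈ C, Tendsto (fun n : ℕ => (((n : ℝ)⁻¹ : ℝ) : EReal) * dKLe μ ν n)
          atTop (nhds (0 : EReal))) ∧
        (∀ μ₁ ∈ C, ∀ μ₂ ∈ C, μ₁ ≠ μ₂ →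
          Filter.limsup (fun n : ℕ => (((n : ℝ)⁻¹ : ℝ) : EReal) * dKLe μ₁ μ₂ n) atTop
            = (⊤ : EReal)) ∧
        ¬ ∃ D : Set (Measure (ℕ → Bool)), D.Countable ∧ D ⊆ C ∧
            ∀ μ ∈ C, ∀ ε : ℝ, 0 < ε → ∃ ν' ∈ D,
              Filter.limsup (fun n : ℕ => (((n : ℝ)⁻¹ : ℝ) : EReal) * dKLe μ ν' n) atTop
                < (ε : EReal) := by
  set C := Set.range fun A => Measure.dirac (sparseSeq A)
  have huncountable : ¬ C.Countable :=
    not_countable_range_of_injective (injective_dirac.comp sparseSeq_injective)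
  have hseparated : ∀ μ₁ ∈ C, ∀ μ₂ ∈ C, μ₁ ≠ μ₂ →
      limsup (fun n : ℕ => (((n : ℝ)⁻¹ : ℝ) : EReal) * dKLe μ₁ μ₂ n) atTop = ⊤ := by
    rintro _ ⟨A, rfl⟩ _ ⟨B, rfl⟩ hne
    exact limsup_inv_mul_dKLe_dirac_dirac fun h => hne (congrArg _ h)
  refine ⟨C, huncountable, ?_, sparseMixture, inferInstance, ?_, hseparated,
    not_exists_countable_dense_of_pairwise_eq_top _ huncountable hseparated⟩
  · rintro _ ⟨A, rfl⟩
    infer_instance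
  · rintro _ ⟨A, rfl⟩
    exact tendsto_inv_mul_dKLe_dirac 4 (inv_pow_four_le_sparseMixture_cyl A)
end
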